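/- arXiv:1404.6586 — 6 statements merged into one kernel-verified Lean document; each statement's English description precedes it below -/
import Mathlib

section
/- Every nonzero root of a univariate polynomial with exactly ℓ nonzero terms (ℓ ≥ 1) over a field of characteristic zero has multiplicity at most ℓ − 1. -/
/-!
Dividing out the power of `X` changes neither the number of terms nor the multiplicity of a
nonzero root, so one may assume the constant term is nonzero. Then differentiation removes exactly
one term and, in characteristic zero, lowers the multiplicity of a root by exactly one; induction on
the number of terms finishes, the base case being that a single monomial has no nonzero root.
-/

open Finset

namespace Polynomial

variable {R : Type*}

theorem support_X_pow_mul [Semiring R] (k : ℕ) (q : R[X]) :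
    (X ^ k * q).support = q.support.map (addRightEmbedding k) := by
  ext n
  simp only [mem_support_iff, coeff_X_pow_mul', mem_map, addRightEmbedding_apply]
  split_ifs with h
  · exact ⟨fun hn => ⟨n - k, hn, Nat.sub_add_cancel h⟩, fun ⟨m, hm, hmn⟩ => by
      rwa [← hmn, Nat.add_sub_cancel]⟩
  · simp only [ne_eq, not_true_eq_false, false_iff, not_exists, not_and]
    intro m _ hmn
    omega

theorem card_support_X_pow_mul [Semiring R] (k : ℕ) (q : R[X]) :
    #(X ^ k * q).support = #q.support := by
  rw [support_X_pow_mul, card_map]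

theorem card_support_derivative [Semiring R] [IsAddTorsionFree R] (p : R[X]) :
    #(derivative p).support = #(p.support.erase 0) := by
  have h : (derivative p).support.map ⟨Nat.succ, Nat.succ_injective⟩ = p.support.erase 0 := by
    ext n
    cases n with
    | zero => simp
    | succ n => simp [-mem_support_iff, mem_support_derivative]
  rw [← h, card_map]

variable [CommRing R] [IsDomain R]

theorem one_lt_card_support_of_isRoot {p : R[X]} {a : R} (hp : p ≠ 0) (ha : a ≠ 0)
    (hroot : p.IsRoot a) : 1 < #p.support := by
  by_contra! h
  rw [IsRoot, ← C_mul_X_pow_eq_self h, eval_C_mul, eval_X_pow] at hroot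
  exact mul_ne_zero (leadingCoeff_ne_zero.2 hp) (pow_ne_zero _ ha) hroot

theorem rootMultiplicity_X_pow_mul {a : R} (ha : a ≠ 0) (k : ℕ) (q : R[X]) :
    rootMultiplicity a (X ^ k * q) = rootMultiplicity a q := by
  rcases eq_or_ne q 0 with rfl | hq
  · simp
  rw [rootMultiplicity_mul (mul_ne_zero (pow_ne_zero _ X_ne_zero) hq),
    rootMultiplicity_eq_zero (by simp [ha]), zero_add]

theorem rootMultiplicity_le_card_support_sub_one [CharZero R] {a : R} (ha : a ≠ 0) (p : R[X]) :
    p.rootMultiplicity a ≤ #p.support - 1 := by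
  induction hn : #p.support using Nat.strong_induction_on generalizing p with
  | _ n ih =>
  rcases eq_or_ne p 0 with rfl | hp
  · simp
  by_cases hroot : p.IsRoot a
  swap
  · simp [rootMultiplicity_eq_zero hroot]
  have hn_two : 2 ≤ n := hn ▸ one_lt_card_support_of_isRoot hp ha hroot
  obtain ⟨q, hpq, hq⟩ := exists_eq_pow_rootMultiplicity_mul_and_not_dvd p hp 0
  rw [C_0, sub_zero] at hpq hq
  have hq_card : #(derivative q).support = n - 1 := by
    rw [card_support_derivative, card_erase_of_mem (mem_support_iff.2 (X_dvd_iff.not.1 hq)), ← hn,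
      hpq, card_support_X_pow_mul]
  have h_ih := ih (n - 1) (by omega) _ hq_card
  have h_deriv := rootMultiplicity_sub_one_le_derivative_rootMultiplicity q a
  rw [hpq, rootMultiplicity_X_pow_mul ha]
  omega

end Polynomial

theorem stmt_0_general {F : Type*} [Field F] [CharZero F] (p : Polynomial F) (ℓ : ℕ)
    (hsupp : p.support.card = ℓ) (a : F) (ha : a ≠ 0) :
    p.rootMultiplicity a ≤ ℓ - 1 :=
  hsupp ▸ Polynomial.rootMultiplicity_le_card_support_sub_one ha p

/-- Every nonzero root of a univariate polynomial with exactly `ℓ` nonzero terms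
(`ℓ ≥ 1`) over a field of characteristic zero has multiplicity at most `ℓ - 1`. -/
theorem stmt_0 {F : Type*} [Field F] [CharZero F] (p : Polynomial F) (ℓ : ℕ)
    (hℓ : 1 ≤ ℓ) (hsupp : p.support.card = ℓ) (a : F) (ha : a ≠ 0)
    (hroot : p.IsRoot a) :
    p.rootMultiplicity a ≤ ℓ - 1 :=
  stmt_0_general p ℓ hsupp a ha
end

section
/- Let V = {v₁,…,vₙ} ⊂ ℕⁿ be linearly independent integer vectors with |det[v₁ … vₙ]| > 1. Then there exists a nonzero vector w ∈ ℕⁿ \ {0} of the form w = Σⱼ λⱼ vⱼ with all λⱼ ∈ [0,1), and for any such w, replacing any vⱼ with λⱼ ≠ 0 by w yields a matrix whose determinant has strictly smaller absolute value: 1 ≤ |det[w v₂ … vₙ]| < |det[v₁ … vₙ]| (when λ₁ ≠ 0). -/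
/-!
Since `|det A| ≠ 1`, the integer matrix `A = [v₁ … vₙ]` is not invertible over `ℤ`, so some
`x ∈ ℤⁿ` is not an integer combination of the columns. Writing `x = A μ` over `ℝ` and subtracting
`A ⌊μ⌋` leaves the lattice point `w = A (fract μ)`, which is nonzero and, the columns being
nonnegative, lies in `ℕⁿ`. Replacing column `j` by any `w = A λ` multiplies the determinant by
`λⱼ ∈ (0, 1)`, and the new determinant is a nonzero integer.
-/

namespace Matrix

variable {ι : Type*} [Fintype ι] [DecidableEq ι]

theorem exists_sub_mulVec_eq_mulVec_mem_Ico (A : Matrix ι ι ℤ) (hA : A.det ≠ 0) (x : ι → ℤ) :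
    ∃ (z : ι → ℤ) (lam : ι → ℝ), (∀ j, lam j ∈ Set.Ico 0 1) ∧
      ∀ i, ((x - A *ᵥ z) i : ℝ) = (A.map (Int.cast : ℤ → ℝ) *ᵥ lam) i := by
  set B : Matrix ι ι ℝ := A.map Int.cast
  have hB : IsUnit B.det := by
    rw [← Int.cast_det, isUnit_iff_ne_zero]
    exact_mod_cast hA
  set μ := B⁻¹ *ᵥ (Int.cast ∘ x)
  have hμ : B *ᵥ μ = Int.cast ∘ x := by
    rw [mulVec_mulVec, mul_nonsing_inv B hB, one_mulVec]
  refine ⟨fun j => ⌊μ j⌋, fun j => Int.fract (μ j),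
    fun j => ⟨Int.fract_nonneg _, Int.fract_lt_one _⟩, fun i => ?_⟩
  have hfloor := (Int.castRingHom ℝ).map_mulVec A (fun j => ⌊μ j⌋) i
  simp only [eq_intCast, Function.comp_def] at hfloor
  have hfract : (fun j => Int.fract (μ j)) = μ - fun j => (⌊μ j⌋ : ℝ) :=
    funext fun j => (Int.self_sub_floor _).symm
  rw [hfract, mulVec_sub, hμ, Pi.sub_apply, Pi.sub_apply, Int.cast_sub, hfloor]
  rfl

theorem intCast_det_updateCol_of_mulVec (A : Matrix ι ι ℤ) (w : ι → ℤ) (lam : ι → ℝ)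
    (hw : ∀ i, (w i : ℝ) = (A.map (Int.cast : ℤ → ℝ) *ᵥ lam) i) (j : ι) :
    ((A.updateCol j w).det : ℝ) = lam j * A.det := by
  have hcol : Int.cast ∘ w = fun k => ∑ i, lam i • A.map (Int.cast : ℤ → ℝ) k i := by
    funext k
    simp only [Function.comp_apply, hw, mulVec, dotProduct, smul_eq_mul, mul_comm]
  rw [Int.cast_det, map_updateCol, hcol, det_updateCol_sum, ← Int.cast_det, smul_eq_mul]

theorem abs_det_updateCol_lt (A : Matrix ι ι ℤ) (hA : A.det ≠ 0) (w : ι → ℤ) (lam : ι → ℝ)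
    (hw : ∀ i, (w i : ℝ) = (A.map (Int.cast : ℤ → ℝ) *ᵥ lam) i) (j : ι)
    (hlam : lam j ∈ Set.Ioo 0 1) :
    1 ≤ |(A.updateCol j w).det| ∧ |(A.updateCol j w).det| < |A.det| := by
  have hdet := intCast_det_updateCol_of_mulVec A w lam hw j
  have hA' : (0 : ℝ) < |(A.det : ℝ)| := by positivity
  refine ⟨Int.one_le_abs fun h0 => ?_, ?_⟩
  · rw [h0, Int.cast_zero, eq_comm, mul_eq_zero] at hdet
    exact hdet.elim hlam.1.ne' (by exact_mod_cast hA)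
  · have : |((A.updateCol j w).det : ℝ)| < |(A.det : ℝ)| := by
      rw [hdet, abs_mul, abs_of_pos hlam.1]
      exact mul_lt_of_lt_one_left hA' hlam.2
    exact_mod_cast this

end Matrix

/-- If `v₁,…,vₙ ∈ ℕⁿ` have `|det[v₁ … vₙ]| > 1`, then there is a nonzero `w ∈ ℕⁿ`
of the form `w = Σ λⱼ vⱼ` with all `λⱼ ∈ [0,1)`, and for any such `w`, replacing any
column `vⱼ` with `λⱼ ≠ 0` by `w` strictly decreases the absolute value of the
determinant while keeping it at least `1`. -/
theorem stmt_1 (n : ℕ) (v : Fin n → Fin n → ℕ)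
    (hdet : 1 < |(Matrix.of fun i j => (v j i : ℤ)).det|) :
    (∃ (w : Fin n → ℕ) (lam : Fin n → ℝ), w ≠ 0 ∧
      (∀ j, 0 ≤ lam j ∧ lam j < 1) ∧
      (∀ i, (w i : ℝ) = ∑ j, lam j * (v j i : ℝ))) ∧
    ∀ (w : Fin n → ℕ) (lam : Fin n → ℝ), w ≠ 0 →
      (∀ j, 0 ≤ lam j ∧ lam j < 1) →
      (∀ i, (w i : ℝ) = ∑ j, lam j * (v j i : ℝ)) →
      ∀ j₀, lam j₀ ≠ 0 →
        1 ≤ |(Matrix.of fun i j => if j = j₀ then (w i : ℤ) else (v j i : ℤ)).det| ∧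
        |(Matrix.of fun i j => if j = j₀ then (w i : ℤ) else (v j i : ℤ)).det| <
          |(Matrix.of fun i j => (v j i : ℤ)).det| := by
  set A : Matrix (Fin n) (Fin n) ℤ := Matrix.of fun i j => (v j i : ℤ)
  have hA : A.det ≠ 0 := fun h => by simp [h] at hdet
  have hcomb : ∀ (lam : Fin n → ℝ) i,
      (A.map Int.cast).mulVec lam i = ∑ j, lam j * (v j i : ℝ) := by
    intro lam i
    simp [A, Matrix.mulVec, dotProduct, mul_comm]
  refine ⟨?_, fun w lam _ hlam hw j₀ hj₀ => ?_⟩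
  · have hsurj : ¬ Function.Surjective A.mulVec := by
      rw [Matrix.mulVec_surjective_iff_isUnit, Matrix.isUnit_iff_isUnit_det, Int.isUnit_iff_abs_eq]
      exact hdet.ne'
    obtain ⟨x, hx⟩ := not_forall.mp hsurj
    obtain ⟨z, lam, hlam, hz⟩ := A.exists_sub_mulVec_eq_mulVec_mem_Ico hA x
    have hnonneg : ∀ i, 0 ≤ (x - A.mulVec z) i := fun i => by
      have : (0 : ℝ) ≤ ((x - A.mulVec z) i : ℝ) := by
        rw [hz, hcomb]
        exact Finset.sum_nonneg fun j _ => mul_nonneg (hlam j).1 (Nat.cast_nonneg _)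
      exact_mod_cast this
    refine ⟨fun i => ((x - A.mulVec z) i).toNat, lam, fun h0 => hx ⟨z, ?_⟩, hlam, fun i => ?_⟩
    · funext i
      exact (sub_eq_zero.mp (le_antisymm (Int.toNat_eq_zero.mp (congrFun h0 i)) (hnonneg i))).symm
    · rw [← hcomb, ← hz, ← Int.toNat_of_nonneg (hnonneg i), Int.cast_natCast]
  · have hcol : (Matrix.of fun i j => if j = j₀ then (w i : ℤ) else (v j i : ℤ)) =
        A.updateCol j₀ (fun i => w i) := by
      ext i j
      simp [A, Matrix.updateCol_apply]
    rw [hcol]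
    refine A.abs_det_updateCol_lt hA _ lam (fun i => ?_) j₀
      ⟨(hlam j₀).1.lt_of_ne' hj₀, (hlam j₀).2⟩
    rw [hcomb, ← hw, Int.cast_natCast]
end

section
/- Let M be an n×n matrix with entries in ℕ, partitioned in block form M = [[A, B],[C, D]] where A is k×k and D is (n−k)×(n−k). Suppose det M ≠ 0 and det D ≠ 0. Define the k×k matrix F whose (i,j)-entry is the determinant of the (n−k+1)×(n−k+1) submatrix of M obtained by taking row i together with the last n−k rows, and column j together with the last n−k columns. Then det F ≠ 0. -/
/-!
The bordered minor on row `i`, column `j` is the determinant of the block matrix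
`[[A i j, B i ⬝], [C ⬝ j, D]]`, which by the Schur complement formula equals
`det D * (A - B D⁻¹ C) i j`. Hence `F = det D • (A - B D⁻¹ C)`, and since
`det M = det D * det (A - B D⁻¹ C)`, this gives Sylvester's identity
`det D * det F = (det D) ^ k * det M`.
-/

open Matrix

namespace Matrix

variable {ι κ R : Type*}

theorem submatrix_elim_unit_eq_fromBlocks (M : Matrix (ι ⊕ κ) (ι ⊕ κ) R) (i j : ι) :
    M.submatrix (Sum.elim (fun _ : Unit => Sum.inl i) Sum.inr)
        (Sum.elim (fun _ : Unit => Sum.inl j) Sum.inr) =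
      fromBlocks (of fun _ _ => M.toBlocks₁₁ i j) (of fun _ b => M.toBlocks₁₂ i b)
        (of fun a _ => M.toBlocks₂₁ a j) M.toBlocks₂₂ := by
  ext (_ | _) (_ | _) <;> rfl

variable [Fintype κ] [DecidableEq κ] [CommRing R]

def reductionMatrix (M : Matrix (ι ⊕ κ) (ι ⊕ κ) R) : Matrix ι ι R :=
  of fun i j => (M.submatrix (Sum.elim (fun _ : Unit => Sum.inl i) Sum.inr)
    (Sum.elim (fun _ : Unit => Sum.inl j) Sum.inr)).det

theorem reductionMatrix_eq_det_smul_schur (M : Matrix (ι ⊕ κ) (ι ⊕ κ) R)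
    [Invertible M.toBlocks₂₂] :
    M.reductionMatrix =
      M.toBlocks₂₂.det • (M.toBlocks₁₁ - M.toBlocks₁₂ * ⅟M.toBlocks₂₂ * M.toBlocks₂₁) := by
  ext i j
  rw [reductionMatrix, of_apply, submatrix_elim_unit_eq_fromBlocks, det_fromBlocks₂₂,
    det_unique (n := Unit), smul_apply, smul_eq_mul]
  simp [sub_apply, mul_apply]

theorem det_toBlocks₂₂_mul_det_reductionMatrix [Fintype ι] [DecidableEq ι]
    (M : Matrix (ι ⊕ κ) (ι ⊕ κ) R) [Invertible M.toBlocks₂₂] :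
    M.toBlocks₂₂.det * M.reductionMatrix.det = M.toBlocks₂₂.det ^ Fintype.card ι * M.det := by
  have hM : M.det = M.toBlocks₂₂.det *
      (M.toBlocks₁₁ - M.toBlocks₁₂ * ⅟M.toBlocks₂₂ * M.toBlocks₂₁).det := by
    conv_lhs => rw [← fromBlocks_toBlocks M]
    exact det_fromBlocks₂₂ ..
  rw [hM, reductionMatrix_eq_det_smul_schur, det_smul]
  ring

end Matrix

/-- For an `n × n` matrix `M = [[A,B],[C,D]]` (with `A` of size `k × k` and `D` of size
`(n-k) × (n-k)`, encoded via the index type `Fin k ⊕ Fin m`), if `det M ≠ 0` and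
`det D ≠ 0`, then the reduction matrix `F`, whose `(i,j)` entry is the determinant of
the submatrix of `M` on rows `{i} ∪ {k+1,…,n}` and columns `{j} ∪ {k+1,…,n}`, is
non-degenerate: `det F ≠ 0`. -/
theorem stmt_2 {k m : ℕ} (M : Matrix (Fin k ⊕ Fin m) (Fin k ⊕ Fin m) ℚ)
    (hM : M.det ≠ 0) (hD : M.toBlocks₂₂.det ≠ 0)
    (F : Matrix (Fin k) (Fin k) ℚ)
    (hF : ∀ i j, F i j = (Matrix.of fun a b : Unit ⊕ Fin m =>
      M (Sum.elim (fun _ => Sum.inl i) Sum.inr a)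
        (Sum.elim (fun _ => Sum.inl j) Sum.inr b)).det) :
    F.det ≠ 0 := by
  have : Invertible M.toBlocks₂₂ := invertibleOfIsUnitDet _ (isUnit_iff_ne_zero.mpr hD)
  obtain rfl : F = M.reductionMatrix := ext hF
  intro hF₀
  have hSylvester := det_toBlocks₂₂_mul_det_reductionMatrix M
  rw [hF₀, mul_zero] at hSylvester
  exact mul_ne_zero (pow_ne_zero _ hD) hM hSylvester.symm
end

section
/- Let M = [[A, B],[C, D]] be an n×n matrix over ℚ with D an (n−k)×(n−k) block satisfying det D ≠ 0, and let D* be the adjugate of D. Then the reduction matrix F (whose (i,j)-entry is det of the submatrix on rows {i}∪{k+1,…,n} and columns {j}∪{k+1,…,n}) satisfies the identity F = (det D)·A − B·D*·C. -/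
/-!
Each entry `F i j` is the determinant of `D` bordered by one row and one column of `M`.
By the Schur complement formula this is `det D * (a - b D⁻¹ c)`, and `det D • D⁻¹ = D*`.
-/

namespace Matrix

variable {α : Type*} {m : Type*}

theorem det_fromBlocks_replicateRow_replicateCol [CommRing α] [Fintype m] [DecidableEq m]
    (a : α) (b c : m → α) (D : Matrix m m α) (hD : IsUnit D.det) :
    (fromBlocks (of fun _ _ : Unit => a) (replicateRow Unit b) (replicateCol Unit c) D).det =
      D.det * a - b ⬝ᵥ (D.adjugate *ᵥ c) := by
  have := hD.invertible
  have := invertibleOfDetInvertible D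
  rw [det_fromBlocks₂₂, det_unique (_ - _), invOf_eq, Matrix.mul_smul, Matrix.smul_mul,
    Matrix.mul_assoc, ← replicateCol_mulVec]
  simp only [sub_apply, smul_apply, replicateRow_mul_replicateCol_apply, of_apply, smul_eq_mul,
    mul_sub, mul_invOf_cancel_left]

theorem submatrix_sumElim_inl_inr_eq_fromBlocks {k : Type*} (M : Matrix (k ⊕ m) (k ⊕ m) α)
    (i j : k) :
    M.submatrix (Sum.elim (fun _ : Unit => Sum.inl i) Sum.inr)
        (Sum.elim (fun _ : Unit => Sum.inl j) Sum.inr) =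
      fromBlocks (of fun _ _ => M (Sum.inl i) (Sum.inl j)) (replicateRow Unit (M.toBlocks₁₂ i))
        (replicateCol Unit fun a => M.toBlocks₂₁ a j) M.toBlocks₂₂ := by
  ext (_ | _) (_ | _) <;> rfl

end Matrix

/-- For an `n × n` matrix `M = [[A,B],[C,D]]` over `ℚ` with `det D ≠ 0`, the reduction
matrix `F` (entrywise determinants of the submatrices of `M` on rows `{i} ∪ {k+1,…,n}`
and columns `{j} ∪ {k+1,…,n}`) satisfies `F = (det D) • A - B * D* * C`, where `D*` is
the adjugate of `D`. -/
theorem stmt_3 {k m : ℕ} (M : Matrix (Fin k ⊕ Fin m) (Fin k ⊕ Fin m) ℚ)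
    (hD : M.toBlocks₂₂.det ≠ 0)
    (F : Matrix (Fin k) (Fin k) ℚ)
    (hF : ∀ i j, F i j = (Matrix.of fun a b : Unit ⊕ Fin m =>
      M (Sum.elim (fun _ => Sum.inl i) Sum.inr a)
        (Sum.elim (fun _ => Sum.inl j) Sum.inr b)).det) :
    F = M.toBlocks₂₂.det • M.toBlocks₁₁ -
      M.toBlocks₁₂ * M.toBlocks₂₂.adjugate * M.toBlocks₂₁ := by
  ext i j
  rw [hF, ← Matrix.submatrix.eq_1, Matrix.submatrix_sumElim_inl_inr_eq_fromBlocks,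
    Matrix.det_fromBlocks_replicateRow_replicateCol _ _ _ _ (isUnit_iff_ne_zero.mpr hD),
    Matrix.dotProduct_mulVec]
  rfl
end

section
/- Let NP ⊂ ℝⁿ be a Newton polyhedron, F a face of NP, and g(F) its generator set, namely the set of primitive facet normals v with F ⊆ facet(v). Then g(F) is minimal: for every v ∈ g(F), v does not lie in the cone generated by g(F) \ {v}. Furthermore, the cone C(g(F)) intersected with the set of all primitive facet normals of NP equals g(F). -/
/-- The Newton polyhedron of a finite nonempty set `S ⊂ ℕⁿ`:
the convex hull of `S + ℝ₊ⁿ`. -/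
def NP (n : ℕ) (S : Finset (Fin n → ℕ)) : Set (Fin n → ℝ) :=
  convexHull ℝ {x : Fin n → ℝ |
    ∃ s ∈ S, ∃ r : Fin n → ℝ, (∀ i, 0 ≤ r i) ∧ x = fun i => (s i : ℝ) + r i}

/-- The face of the Newton polyhedron associated with a vector `w`:
the set of points of `NP` minimizing the linear functional `⟨w, ·⟩`. -/
def npFace (n : ℕ) (S : Finset (Fin n → ℕ)) (w : Fin n → ℝ) : Set (Fin n → ℝ) :=
  {α | α ∈ NP n S ∧ ∀ β ∈ NP n S, ∑ i, w i * α i ≤ ∑ i, w i * β i}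

/-- `v ∈ ℕⁿ` is a primitive facet normal of the Newton polyhedron: it is nonzero, its
components are coprime, and its face has affine dimension `n - 1`. -/
def IsFacetNormal (n : ℕ) (S : Finset (Fin n → ℕ)) (v : Fin n → ℕ) : Prop :=
  v ≠ 0 ∧ Finset.univ.gcd v = 1 ∧
    Module.finrank ℝ (vectorSpan ℝ (npFace n S fun i => (v i : ℝ))) = n - 1

/-- A vertex of the Newton polyhedron: a point that is a `0`-dimensional face,
i.e. a singleton face `face(w) = {A}` for some `w ∈ ℝ₊ⁿ \ {0}`. -/
def IsVertex (n : ℕ) (S : Finset (Fin n → ℕ)) (A : Fin n → ℝ) : Prop :=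
  ∃ w : Fin n → ℝ, (∀ i, 0 ≤ w i) ∧ w ≠ 0 ∧ npFace n S w = {A}

/-- The generator set `g(F)` of a face `F`: the primitive facet normals `v` with
`F ⊆ facet(v)`, viewed as real vectors. -/
def genSet (n : ℕ) (S : Finset (Fin n → ℕ)) (Fc : Set (Fin n → ℝ)) :
    Set (Fin n → ℝ) :=
  {x | ∃ v : Fin n → ℕ, x = (fun i => (v i : ℝ)) ∧ IsFacetNormal n S v ∧
    Fc ⊆ npFace n S fun i => (v i : ℝ)}

/-- Membership in the convex polyhedral cone generated by a set `T` of vectors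
(the zero vector is excluded from the cone). -/
def InCone (n : ℕ) (T : Set (Fin n → ℝ)) (x : Fin n → ℝ) : Prop :=
  x ≠ 0 ∧ ∃ (V : Finset (Fin n → ℝ)) (lam : (Fin n → ℝ) → ℝ),
    ↑V ⊆ T ∧ (∀ v ∈ V, 0 ≤ lam v) ∧ x = ∑ v ∈ V, lam v • v

/-- Membership in the relative interior of the cone generated by a (finite) set `T`:
a combination of all generators with strictly positive coefficients. -/
def InConeInt (n : ℕ) (T : Set (Fin n → ℝ)) (x : Fin n → ℝ) : Prop :=
  x ≠ 0 ∧ ∃ (V : Finset (Fin n → ℝ)) (lam : (Fin n → ℝ) → ℝ),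
    ↑V = T ∧ (∀ v ∈ V, 0 < lam v) ∧ x = ∑ v ∈ V, lam v • v

/-!
A point `α` of the face `F` lies in every facet containing `F`, hence minimizes every nonnegative
combination `u = ∑ λ_v v` of generators; so `face(u)` consists of points minimizing each `v`
with `λ_v > 0`, i.e. `face(u) ⊆ facet(v)`. Thus `F ⊆ face(u)` for every `u` in the cone, and if
`u` is itself a facet normal then `facet(u) ⊆ facet(v)`. Two facets with nested affine hulls of
dimension `n - 1` have the same normal line, and a primitive vector in `ℕⁿ` is determined by its
line, so `u = v`; this gives both minimality and `C(g(F)) ∩ {facet normals} = g(F)`.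
-/

open Finset Matrix

section ExposedFace

variable {ι : Type*} [Fintype ι]

def exposedFace (P : Set (ι → ℝ)) (w : ι → ℝ) : Set (ι → ℝ) :=
  {α | α ∈ P ∧ ∀ β ∈ P, w ⬝ᵥ α ≤ w ⬝ᵥ β}

variable {P : Set (ι → ℝ)} {V : Finset (ι → ℝ)} {lam : (ι → ℝ) → ℝ} {α : ι → ℝ}

theorem mem_exposedFace_sum (hαP : α ∈ P) (hlam : ∀ v ∈ V, 0 ≤ lam v)
    (hα : ∀ v ∈ V, α ∈ exposedFace P v) : α ∈ exposedFace P (∑ v ∈ V, lam v • v) := by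
  refine ⟨hαP, fun β hβ => ?_⟩
  simp only [sum_dotProduct, smul_dotProduct, smul_eq_mul]
  exact sum_le_sum fun v hv => mul_le_mul_of_nonneg_left ((hα v hv).2 β hβ) (hlam v hv)

theorem exposedFace_sum_subset (hlam : ∀ v ∈ V, 0 ≤ lam v) (hα : ∀ v ∈ V, α ∈ exposedFace P v)
    {v₀ : ι → ℝ} (hv₀ : v₀ ∈ V) (hpos : 0 < lam v₀) :
    exposedFace P (∑ v ∈ V, lam v • v) ⊆ exposedFace P v₀ := by
  intro β hβ
  have hαP : α ∈ P := (hα v₀ hv₀).1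
  have hsum : ∑ v ∈ V, lam v * (v ⬝ᵥ β - v ⬝ᵥ α) = 0 := by
    have hβα := hβ.2 α hαP
    have hαβ := (mem_exposedFace_sum hαP hlam hα).2 β hβ.1
    simp only [sum_dotProduct, smul_dotProduct, smul_eq_mul] at hβα hαβ
    simp only [mul_sub, sum_sub_distrib]
    linarith
  have hterm : lam v₀ * (v₀ ⬝ᵥ β - v₀ ⬝ᵥ α) = 0 :=
    (sum_eq_zero_iff_of_nonneg fun v hv =>
      mul_nonneg (hlam v hv) (sub_nonneg.2 ((hα v hv).2 β hβ.1))).1 hsum v₀ hv₀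
  have hβα : v₀ ⬝ᵥ β = v₀ ⬝ᵥ α := by
    rcases mul_eq_zero.1 hterm with h | h
    · exact absurd h hpos.ne'
    · linarith
  exact ⟨hβ.1, fun γ hγ => hβα ▸ (hα v₀ hv₀).2 γ hγ⟩

theorem vectorSpan_exposedFace_le_ker [DecidableEq ι] (P : Set (ι → ℝ)) (w : ι → ℝ) :
    vectorSpan ℝ (exposedFace P w) ≤ LinearMap.ker (dotProductEquiv ℝ ι w) := by
  rw [vectorSpan, Submodule.span_le]
  rintro _ ⟨x, hx, y, hy, rfl⟩
  have hxy := hx.2 y hy.1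
  have hyx := hy.2 x hx.1
  simp only [SetLike.mem_coe, LinearMap.mem_ker, dotProductEquiv_apply_apply, vsub_eq_sub,
    dotProduct_sub]
  linarith

end ExposedFace

theorem mul_eq_mul_of_ker_dotProductEquiv_le {ι K : Type*} [Fintype ι] [DecidableEq ι]
    [CommRing K] {u v : ι → K}
    (h : LinearMap.ker (dotProductEquiv K ι v) ≤ LinearMap.ker (dotProductEquiv K ι u))
    (i j : ι) : u i * v j = u j * v i := by
  have hz : Pi.single i (v j) - Pi.single j (v i) ∈ LinearMap.ker (dotProductEquiv K ι v) := by
    simp [dotProduct_sub, dotProduct_single, mul_comm]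
  simpa [dotProduct_sub, dotProduct_single, sub_eq_zero] using h hz

theorem eq_of_gcd_eq_one_of_mul_eq_mul {ι : Type*} [Fintype ι] {u v : ι → ℕ}
    (hu : univ.gcd u = 1) (hv : univ.gcd v = 1) (h : ∀ i j, u i * v j = u j * v i) :
    u = v := by
  funext j
  calc u j = univ.gcd fun i => u j * v i := by simp [Finset.gcd_mul_left, hv]
    _ = univ.gcd fun i => v j * u i := by simp only [h j, mul_comm]
    _ = v j := by simp [Finset.gcd_mul_left, hu]

section NewtonPolyhedron

variable {n : ℕ} {S : Finset (Fin n → ℕ)}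

theorem npFace_eq_exposedFace (w : Fin n → ℝ) : npFace n S w = exposedFace (NP n S) w := rfl

theorem npFace_nonempty (hS : S.Nonempty) {w : Fin n → ℝ} (hw : ∀ i, 0 ≤ w i) :
    (npFace n S w).Nonempty := by
  rw [npFace_eq_exposedFace]
  obtain ⟨s₀, hs₀, hmin⟩ := S.exists_min_image (fun s => w ⬝ᵥ fun i => (s i : ℝ)) hS
  refine ⟨fun i => (s₀ i : ℝ), subset_convexHull ℝ _ ⟨s₀, hs₀, 0, fun _ => le_rfl, by simp⟩,
    fun β hβ => ?_⟩
  refine convexHull_min ?_ (convex_halfSpace_ge (dotProductEquiv ℝ (Fin n) w).isLinear _) hβ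
  rintro _ ⟨s, hs, r, hr, rfl⟩
  have hwr : 0 ≤ w ⬝ᵥ r := dotProduct_nonneg_of_nonneg hw hr
  have hs₀s := hmin s hs
  simp only [Set.mem_ofPred_eq, dotProductEquiv_apply_apply]
  rw [show (fun i => (s i : ℝ) + r i) = (fun i => (s i : ℝ)) + r from rfl, dotProduct_add]
  linarith

theorem vectorSpan_npFace_eq_ker {v : Fin n → ℕ} (hv : IsFacetNormal n S v) :
    vectorSpan ℝ (npFace n S fun i => (v i : ℝ)) =
      LinearMap.ker (dotProductEquiv ℝ (Fin n) fun i => (v i : ℝ)) := by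
  refine Submodule.eq_of_le_of_finrank_eq (vectorSpan_exposedFace_le_ker _ _) ?_
  have hne : dotProductEquiv ℝ (Fin n) (fun i => (v i : ℝ)) ≠ 0 := by
    rw [LinearEquiv.map_ne_zero_iff]
    exact fun h => hv.1 (funext fun i => by simpa using congrFun h i)
  have := Module.Dual.finrank_ker_add_one_of_ne_zero hne
  rw [Module.finrank_fin_fun] at this
  rw [hv.2.2]
  omega

theorem eq_of_npFace_subset {u v : Fin n → ℕ} (hu : univ.gcd u = 1) (hv : IsFacetNormal n S v)
    (h : npFace n S (fun i => (v i : ℝ)) ⊆ npFace n S fun i => (u i : ℝ)) : u = v := by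
  have hker := (vectorSpan_npFace_eq_ker hv).symm.le.trans
    ((vectorSpan_mono ℝ h).trans (vectorSpan_exposedFace_le_ker _ _))
  exact eq_of_gcd_eq_one_of_mul_eq_mul hu hv.2.1 fun i j => by
    exact_mod_cast mul_eq_mul_of_ker_dotProductEquiv_le hker i j

theorem subset_npFace_of_mem_genSet {Fc : Set (Fin n → ℝ)} {y : Fin n → ℝ}
    (hy : y ∈ genSet n S Fc) : Fc ⊆ npFace n S y := by
  obtain ⟨v, rfl, -, h⟩ := hy
  exact h

end NewtonPolyhedron

section Cone

variable {n : ℕ} {P T : Set (Fin n → ℝ)} {x : Fin n → ℝ}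

theorem subset_exposedFace_of_inCone {A : Set (Fin n → ℝ)} (hx : InCone n T x) (hAP : A ⊆ P)
    (hA : ∀ y ∈ T, A ⊆ exposedFace P y) : A ⊆ exposedFace P x := by
  obtain ⟨-, V, lam, hVT, hlam, rfl⟩ := hx
  exact fun α hα => mem_exposedFace_sum (hAP hα) hlam fun v hv => hA v (hVT hv) hα

theorem exists_exposedFace_subset_of_inCone {α : Fin n → ℝ} (hx : InCone n T x)
    (hα : ∀ y ∈ T, α ∈ exposedFace P y) : ∃ y ∈ T, exposedFace P x ⊆ exposedFace P y := by
  obtain ⟨hx0, V, lam, hVT, hlam, rfl⟩ := hx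
  obtain ⟨y, hyV, hy⟩ := exists_ne_zero_of_sum_ne_zero hx0
  have hpos : 0 < lam y := (hlam y hyV).lt_of_ne (left_ne_zero_of_smul hy).symm
  exact ⟨y, hVT hyV, exposedFace_sum_subset hlam (fun v hv => hα v (hVT hv)) hyV hpos⟩

end Cone

theorem stmt_6_general (n : ℕ) (S : Finset (Fin n → ℕ)) (hS : S.Nonempty)
    (w : Fin n → ℝ) (hw : ∀ i, 0 ≤ w i)
    (Fc : Set (Fin n → ℝ)) (hF : Fc = npFace n S w) :
    (∀ x ∈ genSet n S Fc, ¬ InCone n (genSet n S Fc \ {x}) x) ∧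
    (∀ u : Fin n → ℕ, IsFacetNormal n S u →
      (InCone n (genSet n S Fc) (fun i => (u i : ℝ)) ↔
        (fun i => (u i : ℝ)) ∈ genSet n S Fc)) := by
  obtain ⟨α, hα⟩ := npFace_nonempty hS hw
  have hαF : α ∈ Fc := hF ▸ hα
  have hFP : Fc ⊆ NP n S := hF ▸ fun β hβ => hβ.1
  refine ⟨?_, fun u hu => ⟨fun hcone => ⟨u, rfl, hu, ?_⟩, fun hmem => ?_⟩⟩
  · rintro _ ⟨v, rfl, hv, -⟩ hcone
    obtain ⟨_, ⟨⟨u, rfl, hu, -⟩, huv⟩, hsub⟩ := exists_exposedFace_subset_of_inCone hcone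
      fun y hy => subset_npFace_of_mem_genSet hy.1 hαF
    exact huv (by rw [eq_of_npFace_subset hu.2.1 hv hsub]; rfl)
  · exact subset_exposedFace_of_inCone hcone hFP fun y hy => subset_npFace_of_mem_genSet hy
  · refine ⟨fun h => hu.1 (funext fun i => by simpa using congrFun h i), {_}, fun _ => 1,
      by simpa using hmem, by simp, by simp⟩

/-- The generator set `g(F)` of a face `F` of the Newton polyhedron is minimal: no
`v ∈ g(F)` lies in the cone generated by `g(F) \ {v}`; moreover the cone `C(g(F))`
meets the set of all primitive facet normals exactly in `g(F)`. -/
theorem stmt_6 (n : ℕ) (S : Finset (Fin n → ℕ)) (hS : S.Nonempty)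
    (w : Fin n → ℝ) (hw : ∀ i, 0 ≤ w i) (hw0 : w ≠ 0)
    (Fc : Set (Fin n → ℝ)) (hF : Fc = npFace n S w) :
    (∀ x ∈ genSet n S Fc, ¬ InCone n (genSet n S Fc \ {x}) x) ∧
    (∀ u : Fin n → ℕ, IsFacetNormal n S u →
      (InCone n (genSet n S Fc) (fun i => (u i : ℝ)) ↔
        (fun i => (u i : ℝ)) ∈ genSet n S Fc)) :=
  stmt_6_general n S hS w hw Fc hF
end

section
/- Let w(x) = x₁^d + Σ_{j=2}^{d} c_j(x₂,…,xₙ) x₁^{d−j} be a Weierstrass polynomial with c_j(0) = 0 and d ≥ 2, and let N = [[I_k, B],[0, D]] be a reduced exponential matrix in canonical form (det D ≠ 0, entries in ℕ, first row of N corresponding to x₁ being the first standard basis vector e₁). Consider the substitution x = z^N and write the total transform as w(z^N) = z₀^{A·N₀} · q(z), where A = (a₁, …, aₙ) is a vertex of the Newton polyhedron of w lying on all facets indexed by the exceptional columns, N₀ is the exceptional column submatrix, and q is the partial transform. Then: (a) the exponent vector γ of each monomial of q satisfies γ₁ = α₁ − a₁ where α is the corresponding exponent in w; consequently (b) the monomial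 coming from x₁^d has the unique maximal z₁-degree d − a₁ among terms of q of that z₁-degree arising from the apex, and (c) no exponent γ ∈ supp(q) has γ₁ = d − a₁ − 1 when a₁ = 0 (since w has no x₁^{d−1} term). -/
/-! Since the first column of `N` is `e₁`, the `z₁`-exponent of `z^{(α - A)·N}` is just
`α₁ - a₁`. Parts (b) and (c) then only use the gap in the Weierstrass support: off the apex,
`α₁ ≤ d - 2`. -/

theorem Matrix.sum_mul_natCast_eq_of_col_eq_single {ι R : Type*} [Fintype ι] [DecidableEq ι]
    [NonAssocSemiring R] (v : ι → R) (N : Matrix ι ι ℕ) {j : ι}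
    (hN : ∀ i, N i j = if i = j then 1 else 0) :
    ∑ i, v i * (N i j : R) = v j := by
  simp [hN]

theorem stmt_17_general {n k : ℕ} [NeZero n] (hk : 1 ≤ k)
    (d : ℕ) (hd : 2 ≤ d)
    (supp : Set (Fin n → ℕ))
    (D : Fin n → ℕ) (hDdef : D = fun i => if i = 0 then d else 0)
    (hW : ∀ α ∈ supp, α ≠ D → α 0 ≤ d - 2)
    (N : Matrix (Fin n) (Fin n) ℕ)
    (hN : ∀ j : Fin n, (j : ℕ) < k → ∀ i, N i j = if i = j then 1 else 0)
    (A : Fin n → ℕ)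
    (γ : (Fin n → ℕ) → Fin n → ℤ)
    (hγ : ∀ α j, γ α j = ∑ i, ((α i : ℤ) - (A i : ℤ)) * (N i j : ℤ)) :
    (∀ α ∈ supp, γ α 0 = (α 0 : ℤ) - (A 0 : ℤ)) ∧
    (∀ α ∈ supp, γ α 0 ≤ (d : ℤ) - (A 0 : ℤ) ∧
      (γ α 0 = (d : ℤ) - (A 0 : ℤ) → α = D)) ∧
    (A 0 = 0 → ∀ α ∈ supp, γ α 0 ≠ (d : ℤ) - (A 0 : ℤ) - 1) := by
  have hγ0 (α : Fin n → ℕ) : γ α 0 = (α 0 : ℤ) - A 0 := by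
    rw [hγ]
    exact Matrix.sum_mul_natCast_eq_of_col_eq_single _ N (hN 0 (by rw [Fin.val_zero]; exact hk))
  have hgap : ∀ α ∈ supp, α = D ∨ α 0 + 2 ≤ d := fun α hα => by
    by_cases h : α = D
    · exact .inl h
    · have := hW α hα h
      omega
  have hD0 : D 0 = d := by simp [hDdef]
  refine ⟨fun α _ => hγ0 α, fun α hα => ?_, fun _ α hα => ?_⟩ <;>
    rw [hγ0] <;> rcases hgap α hα with rfl | h
  · exact ⟨by omega, fun _ => rfl⟩
  · exact ⟨by omega, fun _ => by omega⟩
  · omega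
  · omega

/-- Let `w(x) = x₁^d + Σ_{j≥2} c_j(x₂,…,xₙ) x₁^{d-j}` be a Weierstrass polynomial
(`d ≥ 2`), modeled by its support `supp ⊆ ℕⁿ`: the apex `D = (d,0,…,0)` lies in the
support, and every other exponent `α` has `α₁ ≤ d - 2`. Let `N` be a reduced
exponential matrix in canonical form (its first `k ≥ 1` columns are the standard basis
vectors, and it is non-degenerate over `ℤ`), `A` a vertex exponent in the support, and
`γ(α) = (α - A)·N` the exponents of the partial transform under `x = z^N`. Then:
(a) `γ(α)₁ = α₁ - a₁` for every `α` in the support; consequently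
(b) `γ(α)₁ ≤ d - a₁` with equality only for the apex `α = D` (unique maximal
`z₁`-degree); and
(c) if `a₁ = 0` then no `γ ∈ supp(q)` has `γ₁ = d - a₁ - 1`. -/
theorem stmt_17 {n k : ℕ} [NeZero n] (hk : 1 ≤ k) (hkn : k ≤ n)
    (d : ℕ) (hd : 2 ≤ d)
    (supp : Set (Fin n → ℕ))
    (D : Fin n → ℕ) (hDdef : D = fun i => if i = 0 then d else 0)
    (hDmem : D ∈ supp)
    (hW : ∀ α ∈ supp, α ≠ D → α 0 ≤ d - 2)
    (N : Matrix (Fin n) (Fin n) ℕ)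
    (hN : ∀ j : Fin n, (j : ℕ) < k → ∀ i, N i j = if i = j then 1 else 0)
    (hNdet : (N.map (fun a => (a : ℤ))).det ≠ 0)
    (A : Fin n → ℕ) (hA : A ∈ supp)
    (γ : (Fin n → ℕ) → Fin n → ℤ)
    (hγ : ∀ α j, γ α j = ∑ i, ((α i : ℤ) - (A i : ℤ)) * (N i j : ℤ)) :
    (∀ α ∈ supp, γ α 0 = (α 0 : ℤ) - (A 0 : ℤ)) ∧
    (∀ α ∈ supp, γ α 0 ≤ (d : ℤ) - (A 0 : ℤ) ∧
      (γ α 0 = (d : ℤ) - (A 0 : ℤ) → α = D)) ∧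
    (A 0 = 0 → ∀ α ∈ supp, γ α 0 ≠ (d : ℤ) - (A 0 : ℤ) - 1) :=
  stmt_17_general hk d hd supp D hDdef hW N hN A γ hγ
end
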